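/- arXiv:2005.06029 — 4 statements merged into one kernel-verified Lean document; each statement's English description precedes it below -/
import Mathlib

section
/- Let n ≥ 1, p ∈ [1,∞), α > 0 and 0 < λ < 1. If f ∈ X^p is nonnegative and satisfies f ≥ (J_α f)^λ a.e. on ℝ^n×ℝ and f = 0 a.e. on ℝ^n×(−∞,0), then f = 0 a.e. on ℝ^n×ℝ. -/
open MeasureTheory Real Set
open scoped ENNReal

/-- The fractional heat kernel `Φ_α(x,t)`. -/
noncomputable def Phi (n : ℕ) (α : ℝ) (x : EuclideanSpace ℝ (Fin n)) (t : ℝ) : ℝ :=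
  if 0 < t then
    (t ^ (α - 1) / Real.Gamma α) * (4 * Real.pi * t) ^ (-(n : ℝ) / 2) *
      Real.exp (-‖x‖ ^ 2 / (4 * t))
  else 0

/-- `J_α f (x,t) = ∫_{-∞}^t ∫_{ℝ^n} Φ_α(x-ξ,t-τ) f(ξ,τ) dξ dτ`, as a value in `[0,∞]`. -/
noncomputable def J (n : ℕ) (α : ℝ) (f : EuclideanSpace ℝ (Fin n) → ℝ → ℝ)
    (x : EuclideanSpace ℝ (Fin n)) (t : ℝ) : ℝ≥0∞ :=
  ∫⁻ τ in Set.Iio t, ∫⁻ ξ, ENNReal.ofReal (Phi n α (x - ξ) (t - τ) * f ξ τ)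

/-- Membership in `X^p`: measurable with finite `L^p` norm on `ℝ^n × (-∞,T)` for all `T`. -/
def MemXp (n : ℕ) (p : ℝ≥0∞) (f : EuclideanSpace ℝ (Fin n) → ℝ → ℝ) : Prop :=
  Measurable (Function.uncurry f) ∧
  ∀ T : ℝ, eLpNorm (Function.uncurry f) p
    (volume.restrict {q : EuclideanSpace ℝ (Fin n) × ℝ | q.2 < T}) < ⊤

/-!
If `f` is not a.e. zero, it is at least some `ε > 0` on a bounded set of positive measure, and one
application of `J_α` turns this into a Gaussian lower bound `f ≥ c e^{-b|x|²}` on a time slab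
`ℝⁿ × (s, T]`. Feeding a Gaussian lower bound through `f ≥ (J_α f)^λ` across a short time step `d`
returns one with `b` replaced by `q b` for a fixed `q ∈ (λ, 1)`: the power `λ` widens the Gaussian
by the factor `1/λ`, while the heat kernel, used only on a ball of radius `√d`, narrows it by a
factor as close to `1` as we like. The price is `c ↦ (c K d^θ)^λ`. Along geometrically shrinking
steps `d_k` the slabs stay inside `(T - 1, T]`, the widths `b_k^{-1/2}` grow like `q^{-k/2}`, and
`log c_k` decreases only linearly in `k`, with a slope as small as we like when `d_k` decays slowly.
So the `L^p` mass of `f` on `ℝⁿ × (T - 1/2, T)`, at least a constant times `c_k^p b_k^{-n/2}`, is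
infinite, contradicting `f ∈ X^p`.
-/

lemma add_sq_le_one_add_mul_sq {η : ℝ} (hη : 0 < η) (a b : ℝ) :
    (a + b) ^ 2 ≤ (1 + η) * a ^ 2 + (1 + η⁻¹) * b ^ 2 := by
  have h : 0 ≤ (η * a - b) ^ 2 / η := by positivity
  have : (η * a - b) ^ 2 / η = η * a ^ 2 - 2 * a * b + η⁻¹ * b ^ 2 := by field_simp; ring
  nlinarith

lemma norm_sq_le_one_add_mul_sq {E : Type*} [SeminormedAddCommGroup E] {η : ℝ} (hη : 0 < η)
    (x ξ : E) : ‖ξ‖ ^ 2 ≤ (1 + η) * ‖x‖ ^ 2 + (1 + η⁻¹) * ‖x - ξ‖ ^ 2 := by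
  have h : ‖ξ‖ ≤ ‖x‖ + ‖x - ξ‖ := by simpa using norm_sub_le x (x - ξ)
  calc ‖ξ‖ ^ 2 ≤ (‖x‖ + ‖x - ξ‖) ^ 2 := by gcongr
    _ ≤ _ := add_sq_le_one_add_mul_sq hη _ _

lemma exists_measure_inter_closedBall_ne_zero {X : Type*} [MeasurableSpace X]
    [PseudoMetricSpace X] {μ : Measure X} {g : X → ℝ} (hg : ∀ z, 0 ≤ g z)
    (hne : ¬ ∀ᵐ z ∂μ, g z = 0) (z₀ : X) :
    ∃ N : ℕ, μ ({z | 1 / (N + 1 : ℝ) ≤ g z} ∩ Metric.closedBall z₀ N) ≠ 0 := by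
  by_contra! hnull
  refine hne (ae_iff.2 (measure_mono_null (fun z hz ↦ ?_) (measure_iUnion_null hnull)))
  obtain ⟨m, hm⟩ := exists_nat_one_div_lt ((hg z).lt_of_ne' hz)
  obtain ⟨N, hN⟩ := exists_nat_ge (dist z z₀)
  refine mem_iUnion.2 ⟨max m N, ?_, ?_⟩
  · refine le_trans ?_ hm.le
    gcongr
    exact_mod_cast le_max_left m N
  · exact hN.trans (by exact_mod_cast le_max_right m N)

lemma measureReal_ball_pos {X : Type*} [PseudoMetricSpace X] [ProperSpace X] [MeasurableSpace X]
    (μ : Measure X) [μ.IsOpenPosMeasure] [IsFiniteMeasureOnCompacts μ] (x : X) {r : ℝ}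
    (hr : 0 < r) : 0 < μ.real (Metric.ball x r) :=
  ENNReal.toReal_pos (Metric.measure_ball_pos μ x hr).ne' measure_ball_lt_top.ne

section

variable {n : ℕ} {α : ℝ}

local notation "ℝⁿ" => EuclideanSpace ℝ (Fin n)

lemma Phi_nonneg (hα : 0 < α) (y : ℝⁿ) (u : ℝ) : 0 ≤ Phi n α y u := by
  have := Gamma_pos_of_pos hα
  unfold Phi
  split_ifs <;> positivity

lemma le_Phi (hα : 0 < α) {a L u : ℝ} (ha : 0 < a) (hau : a ≤ u) (huL : u ≤ L) (y : ℝⁿ) :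
    min (a ^ (α - 1)) (L ^ (α - 1)) / Gamma α * (4 * π * L) ^ (-(n : ℝ) / 2) *
      exp (-‖y‖ ^ 2 / (4 * a)) ≤ Phi n α y u := by
  have hu : 0 < u := ha.trans_le hau
  have hΓ := Gamma_pos_of_pos hα
  rw [Phi, if_pos hu]
  have hmin : min (a ^ (α - 1)) (L ^ (α - 1)) ≤ u ^ (α - 1) := by
    rcases le_total 0 (α - 1) with h | h
    · exact (min_le_left _ _).trans (rpow_le_rpow ha.le hau h)
    · exact (min_le_right _ _).trans (rpow_le_rpow_of_nonpos hu huL h)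
  have hpow : (4 * π * L) ^ (-(n : ℝ) / 2) ≤ (4 * π * u) ^ (-(n : ℝ) / 2) :=
    rpow_le_rpow_of_nonpos (by positivity) (by gcongr)
      (by simp only [neg_div, neg_nonpos]; positivity)
  have hexp : exp (-‖y‖ ^ 2 / (4 * a)) ≤ exp (-‖y‖ ^ 2 / (4 * u)) := by
    rw [exp_le_exp, neg_div, neg_div, neg_le_neg_iff]
    gcongr
  have hL : 0 < L := hu.trans_le huL
  gcongr

lemma le_Phi_mul_of_gaussian (hα : 0 < α) {η b c d u y : ℝ} (hη : 0 < η) (hb : 0 ≤ b)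
    (hb1 : b ≤ 1) (hc : 0 ≤ c) (hd : 0 < d) (hdu : d ≤ u) (hu1 : u ≤ 1) {x ξ : ℝⁿ}
    (hξ : ‖x - ξ‖ ^ 2 ≤ d) (hy : c * exp (-b * ‖ξ‖ ^ 2) ≤ y) :
    (4 * π) ^ (-(n : ℝ) / 2) * exp (-(1 / 4) - (1 + η⁻¹)) / Gamma α * d ^ α * c *
      exp (-((1 + η) * b) * ‖x‖ ^ 2) ≤ Phi n α (x - ξ) u * y := by
  have hd1 : d ≤ 1 := hdu.trans hu1
  have hPhi := le_Phi (n := n) hα hd hdu hu1 (x - ξ)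
  rw [mul_one, one_rpow] at hPhi
  have hmin : d ^ α ≤ min (d ^ (α - 1)) 1 :=
    le_min (rpow_le_rpow_of_exponent_ge hd hd1 (by linarith)) (rpow_le_one hd.le hd1 hα.le)
  have hkernel : exp (-(1 / 4)) ≤ exp (-‖x - ξ‖ ^ 2 / (4 * d)) := by
    rw [exp_le_exp, neg_div, neg_le_neg_iff, div_le_iff₀ (by positivity)]
    linarith
  have hspread : exp (-(1 + η⁻¹)) * exp (-((1 + η) * b) * ‖x‖ ^ 2) ≤ exp (-b * ‖ξ‖ ^ 2) := by
    have hquad := norm_sq_le_one_add_mul_sq hη x ξ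
    have hloc : b * ‖x - ξ‖ ^ 2 ≤ 1 := by nlinarith
    rw [← exp_add, exp_le_exp]
    nlinarith [inv_pos.2 hη]
  calc (4 * π) ^ (-(n : ℝ) / 2) * exp (-(1 / 4) - (1 + η⁻¹)) / Gamma α * d ^ α * c *
        exp (-((1 + η) * b) * ‖x‖ ^ 2)
      = d ^ α / Gamma α * (4 * π) ^ (-(n : ℝ) / 2) * exp (-(1 / 4)) *
          (c * (exp (-(1 + η⁻¹)) * exp (-((1 + η) * b) * ‖x‖ ^ 2))) := by
        rw [sub_eq_add_neg, exp_add]; ring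
    _ ≤ min (d ^ (α - 1)) 1 / Gamma α * (4 * π) ^ (-(n : ℝ) / 2) *
          exp (-‖x - ξ‖ ^ 2 / (4 * d)) * (c * exp (-b * ‖ξ‖ ^ 2)) := by gcongr
    _ ≤ Phi n α (x - ξ) u * y := by
        gcongr
        exact Phi_nonneg hα _ _

lemma ofReal_mul_volume_le_J {f : ℝⁿ → ℝ → ℝ} {S : Set (ℝⁿ × ℝ)} (hS : MeasurableSet S)
    {x : ℝⁿ} {t m : ℝ} (hSt : ∀ z ∈ S, z.2 < t)
    (hm : ∀ᵐ z : ℝⁿ × ℝ, z ∈ S → m ≤ Phi n α (x - z.1) (t - z.2) * f z.1 z.2) :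
    ENNReal.ofReal m * volume S ≤ J n α f x t := by
  rw [Measure.volume_eq_prod] at hm
  have hm' : ∀ᵐ τ : ℝ, ∀ᵐ ξ : ℝⁿ, (ξ, τ) ∈ S →
      m ≤ Phi n α (x - ξ) (t - τ) * f ξ τ :=
    Measure.ae_ae_of_ae_prod (Measure.measurePreserving_swap.quasiMeasurePreserving.ae hm)
  have hslice : ∀ᵐ τ : ℝ, ∫⁻ ξ, S.indicator (fun _ ↦ ENNReal.ofReal m) (ξ, τ) ≤
      (Iio t).indicator (fun τ ↦ ∫⁻ ξ, ENNReal.ofReal (Phi n α (x - ξ) (t - τ) * f ξ τ)) τ := by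
    filter_upwards [hm'] with τ hτ
    by_cases ht : τ < t
    · rw [indicator_of_mem (mem_Iio.2 ht)]
      refine lintegral_mono_ae ?_
      filter_upwards [hτ] with ξ hξ
      by_cases hS' : (ξ, τ) ∈ S
      · rw [indicator_of_mem hS']
        exact ENNReal.ofReal_le_ofReal (hξ hS')
      · simp [indicator_of_notMem hS']
    · have : ∀ ξ, (ξ, τ) ∉ S := fun ξ hξ ↦ ht (hSt _ hξ)
      simp [indicator_of_notMem (this _), indicator_of_notMem (notMem_Iio.2 (not_lt.1 ht))]
  calc ENNReal.ofReal m * volume S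
      = ∫⁻ τ, ∫⁻ ξ, S.indicator (fun _ ↦ ENNReal.ofReal m) (ξ, τ) := by
        rw [← lintegral_indicator_const hS, Measure.volume_eq_prod,
          lintegral_prod_symm _ ((measurable_const.indicator hS).aemeasurable)]
    _ ≤ J n α f x t := by
        rw [J, ← lintegral_indicator measurableSet_Iio]
        exact lintegral_mono_ae hslice

lemma exists_gaussian_le_J_of_le_on_closedBall (hα : 0 < α) {f : ℝⁿ → ℝ → ℝ} {A : Set (ℝⁿ × ℝ)}
    {ε R : ℝ} (hA : MeasurableSet A) (hAR : A ⊆ Metric.closedBall 0 R)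
    (hAf : ∀ z ∈ A, ε ≤ f z.1 z.2) (hε : 0 < ε) (hvol : volume A ≠ 0) :
    ∃ m > 0, ∀ x t, R + 1 < t → t ≤ R + 2 →
      ENNReal.ofReal (m * exp (-(1 / 2) * ‖x‖ ^ 2)) ≤ J n α f x t := by
  obtain ⟨z₀, hz₀⟩ := nonempty_of_measure_ne_zero hvol
  have hR : 0 ≤ R := (norm_nonneg z₀).trans (mem_closedBall_zero_iff.1 (hAR hz₀))
  have hfin : volume A ≠ ⊤ := ((measure_mono hAR).trans_lt measure_closedBall_lt_top).ne
  set κ := min ((1 : ℝ) ^ (α - 1)) ((2 * R + 2) ^ (α - 1)) / Gamma α *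
    (4 * π * (2 * R + 2)) ^ (-(n : ℝ) / 2)
  have hκ : 0 < κ := by
    have := Gamma_pos_of_pos hα
    simp only [κ, one_rpow]
    exact mul_pos (div_pos (lt_min one_pos (by positivity)) this) (by positivity)
  refine ⟨κ * exp (-R ^ 2 / 2) * ε * (volume A).toReal,
    by have := ENNReal.toReal_pos hvol hfin; positivity, fun x t ht htR ↦ ?_⟩
  have hpt : ∀ z ∈ A, κ * exp (-R ^ 2 / 2) * ε * exp (-(1 / 2) * ‖x‖ ^ 2) ≤
      Phi n α (x - z.1) (t - z.2) * f z.1 z.2 := by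
    intro z hz
    have hzR : ‖z‖ ≤ R := mem_closedBall_zero_iff.1 (hAR hz)
    have h₁ : ‖z.1‖ ≤ R := (norm_fst_le z).trans hzR
    have h₂ : |z.2| ≤ R := (norm_snd_le z).trans hzR
    have hdist : ‖x - z.1‖ ^ 2 ≤ 2 * ‖x‖ ^ 2 + 2 * R ^ 2 := by
      have := add_sq_le (a := ‖x‖) (b := ‖z.1‖)
      have := norm_sub_le x z.1
      nlinarith [norm_nonneg x, norm_nonneg z.1, norm_nonneg (x - z.1)]
    have hPhi := le_Phi (n := n) hα one_pos (a := 1) (u := t - z.2) (L := 2 * R + 2)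
      (by linarith [le_abs_self z.2]) (by linarith [neg_abs_le z.2]) (x - z.1)
    have hexp : exp (-R ^ 2 / 2) * exp (-(1 / 2) * ‖x‖ ^ 2) ≤ exp (-‖x - z.1‖ ^ 2 / (4 * 1)) := by
      rw [← exp_add, exp_le_exp]
      linarith
    calc κ * exp (-R ^ 2 / 2) * ε * exp (-(1 / 2) * ‖x‖ ^ 2)
        = κ * (exp (-R ^ 2 / 2) * exp (-(1 / 2) * ‖x‖ ^ 2)) * ε := by ring
      _ ≤ κ * exp (-‖x - z.1‖ ^ 2 / (4 * 1)) * f z.1 z.2 := by gcongr; exact hAf z hz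
      _ ≤ Phi n α (x - z.1) (t - z.2) * f z.1 z.2 := by
        gcongr
        exact hε.le.trans (hAf z hz)
  have hAt : ∀ z ∈ A, z.2 < t := fun z hz ↦ by
    have : |z.2| ≤ R := (norm_snd_le z).trans (mem_closedBall_zero_iff.1 (hAR hz))
    linarith [le_abs_self z.2]
  calc ENNReal.ofReal (κ * exp (-R ^ 2 / 2) * ε * (volume A).toReal * exp (-(1 / 2) * ‖x‖ ^ 2))
      = ENNReal.ofReal (κ * exp (-R ^ 2 / 2) * ε * exp (-(1 / 2) * ‖x‖ ^ 2)) * volume A := by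
        rw [← ENNReal.ofReal_toReal hfin, ← ENNReal.ofReal_mul (by positivity),
          ENNReal.toReal_ofReal ENNReal.toReal_nonneg]
        ring_nf
    _ ≤ J n α f x t :=
        ofReal_mul_volume_le_J hA hAt (.of_forall hpt)

def GaussianLowerBound (f : ℝⁿ → ℝ → ℝ) (c b s T : ℝ) : Prop :=
  ∀ᵐ z : ℝⁿ × ℝ, s < z.2 → z.2 ≤ T → c * exp (-b * ‖z.1‖ ^ 2) ≤ f z.1 z.2

lemma GaussianLowerBound.of_le_J {f : ℝⁿ → ℝ → ℝ} {lam m b c s T : ℝ} (hlam : 0 ≤ lam)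
    (hpos : ∀ x t, 0 ≤ f x t)
    (hineq : ∀ᵐ z : ℝⁿ × ℝ, J n α f z.1 z.2 ^ lam ≤ ENNReal.ofReal (f z.1 z.2))
    (hm : 0 ≤ m) (hc : c ≤ m ^ lam)
    (hJ : ∀ x t, s < t → t ≤ T → ENNReal.ofReal (m * exp (-b * ‖x‖ ^ 2)) ≤ J n α f x t) :
    GaussianLowerBound f c (lam * b) s T := by
  filter_upwards [hineq] with z hz hs hT
  have h := (ENNReal.rpow_le_rpow (hJ z.1 z.2 hs hT) hlam).trans hz
  rw [ENNReal.ofReal_rpow_of_nonneg (by positivity) hlam,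
    ENNReal.ofReal_le_ofReal_iff (hpos _ _), mul_rpow hm (exp_pos _).le, ← exp_mul] at h
  calc c * exp (-(lam * b) * ‖z.1‖ ^ 2)
      = c * exp (-b * ‖z.1‖ ^ 2 * lam) := by ring_nf
    _ ≤ f z.1 z.2 := by grw [hc]; exact h

lemma GaussianLowerBound.mono_const {f : ℝⁿ → ℝ → ℝ} {c c' b s T : ℝ} (hc : c' ≤ c)
    (h : GaussianLowerBound f c b s T) : GaussianLowerBound f c' b s T := by
  filter_upwards [h] with z hz hs hT
  exact (mul_le_mul_of_nonneg_right hc (exp_pos _).le).trans (hz hs hT)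

lemma exists_gaussianLowerBound_step (hα : 0 < α) {f : ℝⁿ → ℝ → ℝ} {lam q : ℝ}
    (hlam : 0 < lam) (hq : lam < q) (hpos : ∀ x t, 0 ≤ f x t)
    (hineq : ∀ᵐ z : ℝⁿ × ℝ, J n α f z.1 z.2 ^ lam ≤ ENNReal.ofReal (f z.1 z.2)) :
    ∃ K > 0, ∀ ⦃T c c' b s d : ℝ⦄, 0 ≤ c → 0 ≤ b → b ≤ 1 → 0 < d → T ≤ s + 1 →
      c' ≤ (c * K * d ^ (α + n / 2 + 1)) ^ lam →
      GaussianLowerBound f c b s T → GaussianLowerBound f c' (q * b) (s + 2 * d) T := by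
  set η := q / lam - 1
  have hη : 0 < η := by simp only [η, sub_pos, one_lt_div hlam, hq]
  set ω := volume.real (Metric.ball (0 : ℝⁿ) 1)
  have hω : 0 < ω := measureReal_ball_pos _ _ one_pos
  set K₀ := (4 * π) ^ (-(n : ℝ) / 2) * exp (-(1 / 4) - (1 + η⁻¹)) / Gamma α
  have hK₀ : 0 < K₀ := by have := Gamma_pos_of_pos hα; positivity
  refine ⟨K₀ * ω, by positivity, fun T c c' b s d hc hb hb1 hd hTs hc' h ↦ ?_⟩
  have hqb : q * b = lam * ((1 + η) * b) := by
    rw [show 1 + η = q / lam by ring]; field_simp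
  rw [hqb]
  refine GaussianLowerBound.of_le_J hlam.le hpos hineq (by positivity) hc' fun x t ht htT ↦ ?_
  set S := Metric.ball x √d ×ˢ Ioc s (s + d)
  have hSt : ∀ z ∈ S, z.2 < t := fun z hz ↦ by linarith [hz.2.2]
  have hm : ∀ᵐ z : ℝⁿ × ℝ, z ∈ S → K₀ * d ^ α * c * exp (-((1 + η) * b) * ‖x‖ ^ 2) ≤
      Phi n α (x - z.1) (t - z.2) * f z.1 z.2 := by
    filter_upwards [h] with z hz hzS
    obtain ⟨hξ, hτs, hτd⟩ := hzS
    have hξ' : ‖x - z.1‖ ^ 2 ≤ d := by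
      rw [Metric.mem_ball, dist_comm, dist_eq_norm] at hξ
      have := pow_lt_pow_left₀ hξ (norm_nonneg _) two_ne_zero
      rw [sq_sqrt hd.le] at this
      exact this.le
    exact le_Phi_mul_of_gaussian hα hη hb hb1 hc hd (by linarith) (by linarith) hξ'
      (hz hτs (by linarith))
  have hvol : volume S = ENNReal.ofReal (d ^ ((n : ℝ) / 2) * ω * d) := by
    rw [Measure.volume_eq_prod, Measure.prod_prod, Measure.addHaar_ball_of_pos _ _ (sqrt_pos.2 hd),
      finrank_euclideanSpace_fin, ← ofReal_measureReal measure_ball_lt_top.ne, Real.volume_Ioc,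
      add_sub_cancel_left, ← ENNReal.ofReal_mul (by positivity),
      ← ENNReal.ofReal_mul (by positivity),
      sqrt_eq_rpow, ← rpow_natCast, ← rpow_mul hd.le]
    simp only [ω]
    ring_nf
  calc ENNReal.ofReal (c * (K₀ * ω) * d ^ (α + n / 2 + 1) * exp (-((1 + η) * b) * ‖x‖ ^ 2))
      = ENNReal.ofReal (K₀ * d ^ α * c * exp (-((1 + η) * b) * ‖x‖ ^ 2)) * volume S := by
        rw [hvol, ← ENNReal.ofReal_mul (by positivity), rpow_add hd, rpow_add hd, rpow_one]
        ring_nf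
    _ ≤ J n α f x t := ofReal_mul_volume_le_J (measurableSet_ball.prod measurableSet_Ioc) hSt hm

lemma GaussianLowerBound.iterate {f : ℝⁿ → ℝ → ℝ} {lam q θ K C₀ b₀ s₀ T v : ℝ}
    (hlam0 : 0 < lam) (hlam1 : lam < 1) (hθ : 0 < θ) (hK : 0 < K) (hq0 : 0 ≤ q) (hq1 : q ≤ 1)
    (hC₀ : 0 < C₀) (hb₀ : 0 ≤ b₀) (hb₀1 : b₀ ≤ 1) (hT : T ≤ s₀ + 1) (hv : v < 0)
    (hstep : ∀ ⦃c c' b s d : ℝ⦄, 0 ≤ c → 0 ≤ b → b ≤ 1 → 0 < d → T ≤ s + 1 →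
      c' ≤ (c * K * d ^ θ) ^ lam →
      GaussianLowerBound f c b s T → GaussianLowerBound f c' (q * b) (s + 2 * d) T)
    (h₀ : GaussianLowerBound f C₀ b₀ s₀ T) :
    ∃ u₀, ∀ k : ℕ, ∃ s ≤ s₀ + 1 / 2, GaussianLowerBound f (exp (u₀ + v * k)) (b₀ * q ^ k) s T := by
  set ℓ := (1 - lam) * v / (lam * θ)
  have hℓ : ℓ < 0 := div_neg_of_neg_of_pos (mul_neg_of_pos_of_neg (by linarith) hv) (by positivity)
  set ρ := exp ℓ
  have hρ0 : 0 < ρ := exp_pos ℓ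
  have hρ1 : 0 < 1 - ρ := sub_pos.2 (exp_lt_one_iff.2 hℓ)
  set L := log (K * ((1 - ρ) / 4) ^ θ)
  set u₀ := min (log C₀) ((lam * L - v) / (1 - lam))
  -- `u₀ + v * k` is a subsolution of `a ↦ lam * (a + L + θ * log d_k)` with `d_k = (1 - ρ) ρ^k / 4`
  have hrec : ∀ k : ℕ, exp (u₀ + v * (k + 1)) ≤
      (exp (u₀ + v * k) * K * ((1 - ρ) * ρ ^ k / 4) ^ θ) ^ lam := by
    intro k
    have hL : K * ((1 - ρ) / 4) ^ θ = exp L := (exp_log (by positivity)).symm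
    have hu₀ : u₀ * (1 - lam) ≤ lam * L - v := (le_div_iff₀ (by linarith)).1 (min_le_right _ _)
    have hℓθ : lam * θ * ℓ = (1 - lam) * v := by simp only [ℓ]; field_simp
    rw [show (1 - ρ) * ρ ^ k / 4 = (1 - ρ) / 4 * ρ ^ k by ring,
      mul_rpow (x := (1 - ρ) / 4) (by positivity) (by positivity), ← exp_nat_mul, ← exp_mul,
      show exp (u₀ + v * k) * K * (((1 - ρ) / 4) ^ θ * exp (k * ℓ * θ)) =
        exp (u₀ + v * k) * (K * ((1 - ρ) / 4) ^ θ) * exp (k * ℓ * θ) by ring,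
      hL, ← exp_add, ← exp_add, ← exp_mul, exp_le_exp]
    nlinarith
  have hchain : ∀ k : ℕ, GaussianLowerBound f (exp (u₀ + v * k)) (b₀ * q ^ k)
      (s₀ + (1 - ρ ^ k) / 2) T := by
    intro k
    induction k with
    | zero => simpa using h₀.mono_const ((exp_le_exp.2 (min_le_left _ _)).trans_eq (exp_log hC₀))
    | succ k ih =>
      have hρk : ρ ^ k ≤ 1 := pow_le_one₀ hρ0.le (by linarith)
      have hnext := hstep (c' := exp (u₀ + v * (k + 1))) (d := (1 - ρ) * ρ ^ k / 4) (exp_pos _).le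
        (by positivity) (mul_le_one₀ hb₀1 (by positivity) (pow_le_one₀ hq0 hq1)) (by positivity)
        (by linarith) (hrec k) ih
      rw [show b₀ * q ^ (k + 1) = q * (b₀ * q ^ k) by ring, pow_succ,
        show s₀ + (1 - ρ ^ k * ρ) / 2 = s₀ + (1 - ρ ^ k) / 2 + 2 * ((1 - ρ) * ρ ^ k / 4) by ring]
      exact_mod_cast hnext
  exact ⟨u₀, fun k ↦ ⟨_, by linarith [pow_pos hρ0 k], hchain k⟩⟩

lemma GaussianLowerBound.ofReal_le_lintegral {f : ℝⁿ → ℝ → ℝ} (hpos : ∀ x t, 0 ≤ f x t)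
    {c b s s' T p : ℝ} (h : GaussianLowerBound f c b s T) (hc : 0 ≤ c) (hb : 0 < b)
    (hs : s ≤ s') (hp : 0 ≤ p) :
    ENNReal.ofReal ((c * exp (-1)) ^ p * (√b⁻¹ ^ n * volume.real (Metric.ball (0 : ℝⁿ) 1)) *
      (T - s')) ≤ ∫⁻ z in {z : ℝⁿ × ℝ | z.2 < T}, ‖Function.uncurry f z‖ₑ ^ p := by
  set S := Metric.ball (0 : ℝⁿ) √b⁻¹ ×ˢ Ioo s' T
  have hS : MeasurableSet S := measurableSet_ball.prod measurableSet_Ioo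
  have hbound : ∀ᵐ z ∂volume.restrict S,
      ENNReal.ofReal ((c * exp (-1)) ^ p) ≤ ‖Function.uncurry f z‖ₑ ^ p := by
    filter_upwards [ae_restrict_of_ae h, ae_restrict_mem hS] with z hz ⟨hx, hs', hT⟩
    rw [mem_ball_zero_iff, lt_sqrt (norm_nonneg _)] at hx
    have hx' : b * ‖z.1‖ ^ 2 < 1 := by simpa [hb.ne'] using mul_lt_mul_of_pos_left hx hb
    have hf : c * exp (-1) ≤ f z.1 z.2 :=
      (mul_le_mul_of_nonneg_left (exp_le_exp.2 (by linarith)) hc).trans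
        (hz (hs.trans_lt hs') hT.le)
    rw [Function.uncurry_apply_pair, Real.enorm_eq_ofReal (hpos _ _),
      ENNReal.ofReal_rpow_of_nonneg (hpos _ _) hp]
    exact ENNReal.ofReal_le_ofReal (rpow_le_rpow (by positivity) hf hp)
  calc ENNReal.ofReal ((c * exp (-1)) ^ p *
        (√b⁻¹ ^ n * volume.real (Metric.ball (0 : ℝⁿ) 1)) * (T - s'))
      = ENNReal.ofReal ((c * exp (-1)) ^ p) * volume S := by
        rw [Measure.volume_eq_prod, Measure.prod_prod, Real.volume_Ioo,
          Measure.addHaar_ball_of_pos _ _ (sqrt_pos.2 (inv_pos.2 hb)), finrank_euclideanSpace_fin,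
          ← ofReal_measureReal measure_ball_lt_top.ne, ← ENNReal.ofReal_mul (by positivity),
          ← ENNReal.ofReal_mul (by positivity), ← ENNReal.ofReal_mul (by positivity)]
        ring_nf
    _ = ∫⁻ _ in S, ENNReal.ofReal ((c * exp (-1)) ^ p) := (setLIntegral_const _ _).symm
    _ ≤ ∫⁻ z in S, ‖Function.uncurry f z‖ₑ ^ p := lintegral_mono_ae hbound
    _ ≤ ∫⁻ z in {z : ℝⁿ × ℝ | z.2 < T}, ‖Function.uncurry f z‖ₑ ^ p :=
        lintegral_mono_set fun z hz ↦ hz.2.2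

lemma lintegral_rpow_eq_top_of_forall_gaussianLowerBound {f : ℝⁿ → ℝ → ℝ}
    (hpos : ∀ x t, 0 ≤ f x t) {p u₀ v b₀ q s' T : ℝ} (hp : 0 < p) (hb₀ : 0 < b₀) (hq : 0 < q)
    (hs' : s' < T) (hslope : n / 2 * log q < p * v)
    (h : ∀ k : ℕ, ∃ s ≤ s', GaussianLowerBound f (exp (u₀ + v * k)) (b₀ * q ^ k) s T) :
    ∫⁻ z in {z : ℝⁿ × ℝ | z.2 < T}, ‖Function.uncurry f z‖ₑ ^ p = ⊤ := by
  by_contra hI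
  set I := (∫⁻ z in {z : ℝⁿ × ℝ | z.2 < T}, ‖Function.uncurry f z‖ₑ ^ p).toReal
  set ω := volume.real (Metric.ball (0 : ℝⁿ) 1)
  have hω : 0 < ω := measureReal_ball_pos _ _ one_pos
  set A := p * (u₀ - 1) - n / 2 * log b₀ + log ω + log (T - s')
  set B := p * v - n / 2 * log q
  have hlow : ∀ k : ℕ, A + B * k ≤ log I := by
    intro k
    obtain ⟨s, hs, hk⟩ := h k
    have hmass := (ENNReal.ofReal_le_iff_le_toReal hI).1
      (hk.ofReal_le_lintegral hpos (exp_pos _).le (by positivity) hs hp.le)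
    refine le_trans (le_of_eq ?_) (log_le_log (by have := sub_pos.2 hs'; positivity) hmass)
    rw [log_mul (by positivity) (by linarith), log_mul (by positivity) (by positivity),
      log_mul (by positivity) hω.ne', log_rpow (by positivity),
      log_mul (exp_pos _).ne' (by norm_num),
      log_exp, log_exp, log_pow, log_sqrt (by positivity), log_inv,
      log_mul hb₀.ne' (by positivity), log_pow]
    simp only [A, B]
    ring
  obtain ⟨k, hk⟩ := exists_nat_gt ((log I - A) / B)
  have := hlow k
  rw [div_lt_iff₀ (by simp only [B]; linarith)] at hk
  linarith

end

theorem super_problem_sublinear_nonexistence_general (n : ℕ) (hn : 1 ≤ n) (p α lam : ℝ)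
    (hp : 1 ≤ p) (hα : 0 < α) (hlam0 : 0 < lam) (hlam1 : lam < 1)
    (f : EuclideanSpace ℝ (Fin n) → ℝ → ℝ)
    (hf : MemXp n (ENNReal.ofReal p) f) (hpos : ∀ x t, 0 ≤ f x t)
    (hineq : ∀ᵐ q : EuclideanSpace ℝ (Fin n) × ℝ,
      (J n α f q.1 q.2) ^ lam ≤ ENNReal.ofReal (f q.1 q.2)) :
    ∀ᵐ q : EuclideanSpace ℝ (Fin n) × ℝ, f q.1 q.2 = 0 := by
  by_contra hne
  obtain ⟨N, hN⟩ := exists_measure_inter_closedBall_ne_zero (g := Function.uncurry f)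
    (fun z ↦ hpos _ _) hne 0
  obtain ⟨m, hm, hJ⟩ := exists_gaussian_le_J_of_le_on_closedBall hα
    ((hf.1 measurableSet_Ici).inter Metric.isClosed_closedBall.measurableSet)
    inter_subset_right (fun z hz ↦ hz.1) (by positivity) hN
  have h₀ := GaussianLowerBound.of_le_J hlam0.le hpos hineq hm.le le_rfl hJ
  obtain ⟨K, hK, hstep⟩ := exists_gaussianLowerBound_step hα hlam0
    (by linarith : lam < (1 + lam) / 2) hpos hineq
  have hq : log ((1 + lam) / 2) < 0 := log_neg (by linarith) (by linarith)
  have hn' : (0 : ℝ) < n := by exact_mod_cast hn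
  -- with this slope of `log c_k`, the mass bound `c_k^p b_k^{-n/2}` grows like `q^{-nk/4}`
  -- for `q = (1 + lam) / 2`
  set v := n / (4 * p) * log ((1 + lam) / 2)
  obtain ⟨u₀, hu₀⟩ := h₀.iterate hlam0 hlam1 (by positivity) hK (by linarith) (by linarith)
    (rpow_pos_of_pos hm _) (by positivity) (by linarith) (by linarith)
    (mul_neg_of_pos_of_neg (by positivity) hq) (@hstep _) (v := v)
  have htop := lintegral_rpow_eq_top_of_forall_gaussianLowerBound (p := p) hpos (by linarith)
    (by positivity) (by linarith) (by linarith : (N : ℝ) + 1 + 1 / 2 < N + 2)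
    (by simp only [v]; field_simp; nlinarith) hu₀
  have hfin := lintegral_rpow_enorm_lt_top_of_eLpNorm_lt_top
    (ENNReal.ofReal_pos.2 (by linarith)).ne' ENNReal.ofReal_ne_top (hf.2 (N + 2))
  rw [ENNReal.toReal_ofReal (by linarith)] at hfin
  exact hfin.ne htop

theorem super_problem_sublinear_nonexistence (n : ℕ) (hn : 1 ≤ n) (p α lam : ℝ)
    (hp : 1 ≤ p) (hα : 0 < α) (hlam0 : 0 < lam) (hlam1 : lam < 1)
    (f : EuclideanSpace ℝ (Fin n) → ℝ → ℝ)
    (hf : MemXp n (ENNReal.ofReal p) f) (hpos : ∀ x t, 0 ≤ f x t)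
    (hineq : ∀ᵐ q : EuclideanSpace ℝ (Fin n) × ℝ,
      (J n α f q.1 q.2) ^ lam ≤ ENNReal.ofReal (f q.1 q.2))
    (hzero : ∀ᵐ q : EuclideanSpace ℝ (Fin n) × ℝ, q.2 < 0 → f q.1 q.2 = 0) :
    ∀ᵐ q : EuclideanSpace ℝ (Fin n) × ℝ, f q.1 q.2 = 0 :=
  super_problem_sublinear_nonexistence_general n hn p α lam hp hα hlam0 hlam1 f hf hpos hineq
end

section
/- Let n ≥ 1, α > 0 and T > 0. Then there exists a constant a > 0, depending only on α, such that the function f(x,t) := e^{a(t+T)}·Φ₁(x, t+T)·χ_{[0,∞)}(t) satisfies: f ∈ X^p for every p ∈ [1,∞), f ≥ J_α f everywhere on ℝ^n×ℝ, f = 0 on ℝ^n×(−∞,0), and f is not zero a.e. -/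
/-!
Take `a = 1`, so that `f(x,t) = e^{t+T} G_{t+T}(x)` for `t ≥ 0`, where `G_t` is the heat kernel
and `Φ_α(x,t) = t^{α-1} G_t(x) / Γ(α)`. By the semigroup property `G_s * G_u = G_{s+u}`,
for `t ≥ 0`
`J_α f(x,t) = e^{t+T} G_{t+T}(x) ∫_0^t s^{α-1} e^{-s} ds / Γ(α) ≤ e^{t+T} G_{t+T}(x) = f(x,t)`.
On each slab `t < T'`, `f` is bounded by a Gaussian in `x` times the indicator of `[0,T')`,
so it is integrable and bounded there, hence in every `L^p` with `p ≥ 1`.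
-/

open MeasureTheory Real Set
open scoped ENNReal

theorem MeasureTheory.memLp_of_integrable_of_bound {α E : Type*} [MeasurableSpace α]
    {μ : Measure α} [NormedAddCommGroup E] {f : α → E} (hf : Integrable f μ) {C : ℝ}
    (hC : ∀ᵐ x ∂μ, ‖f x‖ ≤ C) {p : ℝ≥0∞} (hp : 1 ≤ p) : MemLp f p μ := by
  rcases eq_or_ne p ⊤ with rfl | hp_top
  · exact memLp_top_of_bound hf.1 C hC
  have hp_one : 1 ≤ p.toReal := by
    simpa using ENNReal.toReal_mono hp_top hp
  rw [← integrable_norm_rpow_iff hf.1 (by positivity) hp_top]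
  have h_split : ∀ x, ‖f x‖ ^ p.toReal = ‖f x‖ ^ (p.toReal - 1) * ‖f x‖ := fun x => by
    rw [← rpow_add_one' (norm_nonneg _) (by linarith), sub_add_cancel]
  simp_rw [h_split]
  refine hf.norm.bdd_mul (c := C ^ (p.toReal - 1))
    (hf.1.norm.aemeasurable.pow_const _).aestronglyMeasurable ?_
  filter_upwards [hC] with x hx
  rw [Real.norm_eq_abs, abs_of_nonneg (by positivity)]
  exact rpow_le_rpow (norm_nonneg _) hx (by linarith)

theorem integrable_exp_neg_mul_sq_norm {V : Type*} [NormedAddCommGroup V]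
    [InnerProductSpace ℝ V] [FiniteDimensional ℝ V] [MeasurableSpace V] [BorelSpace V]
    {b : ℝ} (hb : 0 < b) : Integrable fun v : V => exp (-b * ‖v‖ ^ 2) :=
  -- a function that is not integrable has Bochner integral `0`
  Integrable.of_integral_ne_zero <| by
    rw [GaussianFourier.integral_rexp_neg_mul_sq_norm hb]
    positivity

noncomputable def heatKernel (n : ℕ) (t : ℝ) (x : EuclideanSpace ℝ (Fin n)) : ℝ :=
  (4 * π * t) ^ (-(n : ℝ) / 2) * exp (-‖x‖ ^ 2 / (4 * t))

section HeatKernel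

variable {n : ℕ} {s t u : ℝ}

theorem heatKernel_pos (ht : 0 < t) (x : EuclideanSpace ℝ (Fin n)) : 0 < heatKernel n t x := by
  unfold heatKernel
  positivity

theorem Phi_eq_mul_heatKernel (α : ℝ) (x : EuclideanSpace ℝ (Fin n)) (ht : 0 < t) :
    Phi n α x t = t ^ (α - 1) / Gamma α * heatKernel n t x := by
  simp [Phi, heatKernel, ht, mul_assoc]

theorem Phi_one_eq_heatKernel (x : EuclideanSpace ℝ (Fin n)) (ht : 0 < t) :
    Phi n 1 x t = heatKernel n t x := by
  simp [Phi_eq_mul_heatKernel 1 x ht]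

theorem heatKernel_eq_mul_exp (n : ℕ) (t : ℝ) :
    heatKernel n t =
      fun x => (4 * π * t) ^ (-(n : ℝ) / 2) * exp (-(4 * t)⁻¹ * ‖x‖ ^ 2) := by
  ext x
  rw [heatKernel, neg_mul, neg_div (4 * t), div_eq_inv_mul (‖x‖ ^ 2)]

theorem integrable_heatKernel (ht : 0 < t) : Integrable (heatKernel n t) := by
  rw [heatKernel_eq_mul_exp]
  exact (integrable_exp_neg_mul_sq_norm (by positivity)).const_mul _

theorem integral_heatKernel (ht : 0 < t) : ∫ x, heatKernel n t x = 1 := by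
  rw [heatKernel_eq_mul_exp, integral_const_mul,
    GaussianFourier.integral_rexp_neg_mul_sq_norm (by positivity),
    finrank_euclideanSpace_fin, div_inv_eq_mul, neg_div, Real.rpow_neg (by positivity),
    show π * (4 * t) = 4 * π * t by ring, inv_mul_cancel₀ (by positivity)]

theorem lintegral_heatKernel (ht : 0 < t) : ∫⁻ x, ENNReal.ofReal (heatKernel n t x) = 1 := by
  rw [← ofReal_integral_eq_lintegral_ofReal (integrable_heatKernel ht)
    (.of_forall fun x => (heatKernel_pos ht x).le), integral_heatKernel ht, ENNReal.ofReal_one]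

theorem heatKernel_sub_mul_heatKernel (hs : 0 < s) (hu : 0 < u)
    (x ξ : EuclideanSpace ℝ (Fin n)) :
    heatKernel n s (x - ξ) * heatKernel n u ξ =
      heatKernel n (s + u) x * heatKernel n (s * u / (s + u)) (ξ - (u / (s + u)) • x) := by
  have h_const : (4 * π * s) ^ (-(n : ℝ) / 2) * (4 * π * u) ^ (-(n : ℝ) / 2) =
      (4 * π * (s + u)) ^ (-(n : ℝ) / 2) * (4 * π * (s * u / (s + u))) ^ (-(n : ℝ) / 2) := by
    rw [← mul_rpow (by positivity) (by positivity), ← mul_rpow (by positivity) (by positivity)]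
    congr 1
    field_simp
  -- completing the square in `ξ`
  have h_exp : -‖x - ξ‖ ^ 2 / (4 * s) + -‖ξ‖ ^ 2 / (4 * u) =
      -‖x‖ ^ 2 / (4 * (s + u)) +
        -‖ξ - (u / (s + u)) • x‖ ^ 2 / (4 * (s * u / (s + u))) := by
    rw [norm_sub_sq_real, norm_sub_sq_real, real_inner_smul_right, norm_smul, mul_pow,
      Real.norm_eq_abs, sq_abs, real_inner_comm]
    field_simp
    ring
  calc heatKernel n s (x - ξ) * heatKernel n u ξ
      = (4 * π * s) ^ (-(n : ℝ) / 2) * (4 * π * u) ^ (-(n : ℝ) / 2) *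
          exp (-‖x - ξ‖ ^ 2 / (4 * s) + -‖ξ‖ ^ 2 / (4 * u)) := by
        rw [heatKernel, heatKernel, exp_add]
        ring
    _ = _ := by
        rw [h_const, h_exp, exp_add, heatKernel, heatKernel]
        ring

theorem lintegral_heatKernel_sub_mul_heatKernel (hs : 0 < s) (hu : 0 < u)
    (x : EuclideanSpace ℝ (Fin n)) :
    ∫⁻ ξ, ENNReal.ofReal (heatKernel n s (x - ξ) * heatKernel n u ξ) =
      ENNReal.ofReal (heatKernel n (s + u) x) := by
  have hr : 0 < s * u / (s + u) := by positivity
  simp_rw [heatKernel_sub_mul_heatKernel hs hu x,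
    ENNReal.ofReal_mul (heatKernel_pos (add_pos hs hu) x).le]
  rw [lintegral_const_mul' _ _ ENNReal.ofReal_ne_top,
    lintegral_sub_right_eq_self (fun ξ => ENNReal.ofReal (heatKernel n _ ξ)),
    lintegral_heatKernel hr, mul_one]

theorem lintegral_Phi_sub_mul_heatKernel (α : ℝ) (hs : 0 < s) (hu : 0 < u)
    (x : EuclideanSpace ℝ (Fin n)) :
    ∫⁻ ξ, ENNReal.ofReal (Phi n α (x - ξ) s * heatKernel n u ξ) =
      ENNReal.ofReal (s ^ (α - 1) / Gamma α) * ENNReal.ofReal (heatKernel n (s + u) x) := by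
  simp_rw [Phi_eq_mul_heatKernel α _ hs, mul_assoc,
    ENNReal.ofReal_mul' (mul_pos (heatKernel_pos hs _) (heatKernel_pos hu _)).le]
  rw [lintegral_const_mul' _ _ ENNReal.ofReal_ne_top, lintegral_heatKernel_sub_mul_heatKernel hs hu]

theorem heatKernel_le {T S : ℝ} (hT : 0 < T) (hTt : T ≤ t) (htS : t ≤ S)
    (x : EuclideanSpace ℝ (Fin n)) :
    heatKernel n t x ≤ (4 * π * T) ^ (-(n : ℝ) / 2) * exp (-(4 * S)⁻¹ * ‖x‖ ^ 2) := by
  have ht : 0 < t := hT.trans_le hTt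
  rw [heatKernel_eq_mul_exp]
  dsimp only
  gcongr ?_ * ?_
  · have : 0 ≤ (n : ℝ) := n.cast_nonneg
    exact rpow_le_rpow_of_nonpos (by positivity) (by gcongr) (by linarith)
  · gcongr

end HeatKernel

theorem setLIntegral_Iio_exp_neg_mul_rpow_eq_Gamma {α : ℝ} (hα : 0 < α) (t : ℝ) :
    ∫⁻ τ in Iio t, ENNReal.ofReal (exp (-(t - τ)) * (t - τ) ^ (α - 1)) =
      ENNReal.ofReal (Gamma α) := by
  have h_image : (fun τ => t - τ) '' Iio t = Ioi 0 := by simp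
  rw [(Measure.measurePreserving_sub_left volume t).setLIntegral_comp_emb
    (MeasurableEquiv.subLeft t).measurableEmbedding
    (fun y => ENNReal.ofReal (exp (-y) * y ^ (α - 1))), h_image, Gamma_eq_integral hα,
    ofReal_integral_eq_lintegral_ofReal (GammaIntegral_convergent hα)]
  exact (ae_restrict_iff' measurableSet_Ioi).2
    (.of_forall fun y hy => mul_nonneg (exp_pos _).le (rpow_nonneg (le_of_lt hy) _))

theorem setLIntegral_Ico_rpow_div_Gamma_mul_exp_le {α : ℝ} (hα : 0 < α) (t c : ℝ) :
    ∫⁻ τ in Ico 0 t, ENNReal.ofReal ((t - τ) ^ (α - 1) / Gamma α * exp (τ + c)) ≤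
      ENNReal.ofReal (exp (t + c)) := by
  have hΓ := Gamma_pos_of_pos hα
  have h_split : ∀ τ, ENNReal.ofReal ((t - τ) ^ (α - 1) / Gamma α * exp (τ + c)) =
      ENNReal.ofReal (exp (t + c) / Gamma α) *
        ENNReal.ofReal (exp (-(t - τ)) * (t - τ) ^ (α - 1)) := fun τ => by
    rw [← ENNReal.ofReal_mul (by positivity), show τ + c = t + c + -(t - τ) by ring, exp_add]
    ring_nf
  calc ∫⁻ τ in Ico 0 t, ENNReal.ofReal ((t - τ) ^ (α - 1) / Gamma α * exp (τ + c))
      = ENNReal.ofReal (exp (t + c) / Gamma α) *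
          ∫⁻ τ in Ico 0 t, ENNReal.ofReal (exp (-(t - τ)) * (t - τ) ^ (α - 1)) := by
        simp_rw [h_split]
        exact lintegral_const_mul' _ _ ENNReal.ofReal_ne_top
    _ ≤ ENNReal.ofReal (exp (t + c) / Gamma α) *
          ∫⁻ τ in Iio t, ENNReal.ofReal (exp (-(t - τ)) * (t - τ) ^ (α - 1)) := by
        gcongr
        exact Ico_subset_Iio_self
    _ = ENNReal.ofReal (exp (t + c)) := by
        rw [setLIntegral_Iio_exp_neg_mul_rpow_eq_Gamma hα, ← ENNReal.ofReal_mul (by positivity),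
          div_mul_cancel₀ _ hΓ.ne']

theorem J_eq_setLIntegral_Ico {n : ℕ} (α : ℝ) {f : EuclideanSpace ℝ (Fin n) → ℝ → ℝ}
    (hf : ∀ x t, t < 0 → f x t = 0) (x : EuclideanSpace ℝ (Fin n)) (t : ℝ) :
    J n α f x t =
      ∫⁻ τ in Ico 0 t, ∫⁻ ξ, ENNReal.ofReal (Phi n α (x - ξ) (t - τ) * f ξ τ) := by
  have h_support : (Function.support fun τ =>
      ∫⁻ ξ, ENNReal.ofReal (Phi n α (x - ξ) (t - τ) * f ξ τ)) ⊆ Ici 0 := by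
    intro τ hτ
    by_contra hneg
    simp [hf _ τ (not_le.1 hneg)] at hτ
  rw [J, ← setLIntegral_eq_of_support_subset h_support,
    Measure.restrict_restrict measurableSet_Ici, Ici_inter_Iio]

noncomputable def heatSupersolution (n : ℕ) (T : ℝ) (x : EuclideanSpace ℝ (Fin n)) (t : ℝ) :
    ℝ :=
  if 0 ≤ t then exp (t + T) * heatKernel n (t + T) x else 0

section HeatSupersolution

variable {n : ℕ} {T : ℝ}

theorem heatSupersolution_of_neg (x : EuclideanSpace ℝ (Fin n)) {t : ℝ} (ht : t < 0) :
    heatSupersolution n T x t = 0 :=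
  if_neg (not_le.2 ht)

theorem heatSupersolution_of_nonneg (x : EuclideanSpace ℝ (Fin n)) {t : ℝ} (ht : 0 ≤ t) :
    heatSupersolution n T x t = exp (t + T) * heatKernel n (t + T) x :=
  if_pos ht

theorem heatSupersolution_pos (hT : 0 < T) (x : EuclideanSpace ℝ (Fin n)) {t : ℝ}
    (ht : 0 ≤ t) : 0 < heatSupersolution n T x t := by
  rw [heatSupersolution_of_nonneg x ht]
  exact mul_pos (exp_pos _) (heatKernel_pos (by linarith) x)

theorem heatSupersolution_nonneg (hT : 0 < T) (x : EuclideanSpace ℝ (Fin n)) (t : ℝ) :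
    0 ≤ heatSupersolution n T x t := by
  rcases lt_or_ge t 0 with ht | ht
  · rw [heatSupersolution_of_neg x ht]
  · exact (heatSupersolution_pos hT x ht).le

theorem measurable_heatSupersolution : Measurable (Function.uncurry (heatSupersolution n T)) := by
  unfold heatSupersolution heatKernel
  refine Measurable.ite (measurableSet_le measurable_const measurable_snd) ?_ measurable_const
  fun_prop

theorem heatSupersolution_le (hT : 0 < T) (x : EuclideanSpace ℝ (Fin n)) {t S : ℝ}
    (htS : t ≤ S) :
    heatSupersolution n T x t ≤
      exp (S + T) * (4 * π * T) ^ (-(n : ℝ) / 2) * exp (-(4 * (S + T))⁻¹ * ‖x‖ ^ 2) := by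
  rcases lt_or_ge t 0 with ht | ht
  · rw [heatSupersolution_of_neg x ht]
    positivity
  rw [heatSupersolution_of_nonneg x ht, mul_assoc]
  exact mul_le_mul (exp_le_exp.2 (by linarith))
    (heatKernel_le (t := t + T) (S := S + T) hT (by linarith) (by linarith) x)
    (heatKernel_pos (by linarith) x).le (exp_pos _).le

theorem J_heatSupersolution_le {α : ℝ} (hα : 0 < α) (hT : 0 < T)
    (x : EuclideanSpace ℝ (Fin n)) (t : ℝ) :
    J n α (heatSupersolution n T) x t ≤ ENNReal.ofReal (heatSupersolution n T x t) := by
  rw [J_eq_setLIntegral_Ico α (fun x _ => heatSupersolution_of_neg x)]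
  rcases lt_or_ge t 0 with ht | ht
  · simp [Ico_eq_empty_of_le ht.le]
  have h_inner : ∀ τ ∈ Ico 0 t,
      ∫⁻ ξ, ENNReal.ofReal (Phi n α (x - ξ) (t - τ) * heatSupersolution n T ξ τ) =
        ENNReal.ofReal ((t - τ) ^ (α - 1) / Gamma α * exp (τ + T)) *
          ENNReal.ofReal (heatKernel n (t + T) x) := by
    rintro τ ⟨hτ₀, hτt⟩
    simp_rw [heatSupersolution_of_nonneg _ hτ₀, mul_left_comm _ (exp _),
      ENNReal.ofReal_mul (exp_pos _).le]
    rw [lintegral_const_mul' _ _ ENNReal.ofReal_ne_top,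
      lintegral_Phi_sub_mul_heatKernel α (sub_pos.2 hτt) (by linarith),
      show t - τ + (τ + T) = t + T by ring, ENNReal.ofReal_mul' (exp_pos _).le]
    ring
  calc ∫⁻ τ in Ico 0 t, ∫⁻ ξ,
        ENNReal.ofReal (Phi n α (x - ξ) (t - τ) * heatSupersolution n T ξ τ)
      = (∫⁻ τ in Ico 0 t, ENNReal.ofReal ((t - τ) ^ (α - 1) / Gamma α * exp (τ + T))) *
          ENNReal.ofReal (heatKernel n (t + T) x) := by
        rw [setLIntegral_congr_fun measurableSet_Ico h_inner,
          lintegral_mul_const' _ _ ENNReal.ofReal_ne_top]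
    _ ≤ ENNReal.ofReal (exp (t + T)) * ENNReal.ofReal (heatKernel n (t + T) x) := by
        gcongr
        exact setLIntegral_Ico_rpow_div_Gamma_mul_exp_le hα t T
    _ = ENNReal.ofReal (heatSupersolution n T x t) := by
        rw [heatSupersolution_of_nonneg x ht, ENNReal.ofReal_mul (exp_pos _).le]

theorem memXp_heatSupersolution (hT : 0 < T) {p : ℝ≥0∞} (hp : 1 ≤ p) :
    MemXp n p (heatSupersolution n T) := by
  refine ⟨measurable_heatSupersolution, fun T' => ?_⟩
  set S := max T' 0
  set M := exp (S + T) * (4 * π * T) ^ (-(n : ℝ) / 2)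
  have hc : 0 < (4 * (S + T))⁻¹ := by positivity
  set G : EuclideanSpace ℝ (Fin n) × ℝ → ℝ := fun q =>
    M * exp (-(4 * (S + T))⁻¹ * ‖q.1‖ ^ 2) * (Ico 0 T').indicator 1 q.2
  have hG : Integrable G :=
    ((integrable_exp_neg_mul_sq_norm hc).const_mul M).mul_prod
      ((integrableOn_const measure_Ico_lt_top.ne).integrable_indicator measurableSet_Ico)
  have hG_le : ∀ q, G q ≤ M := fun q => by
    have h_ind : (Ico 0 T').indicator (1 : ℝ → ℝ) q.2 ≤ 1 :=
      indicator_le_self' (by simp) q.2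
    have h_exp : exp (-(4 * (S + T))⁻¹ * ‖q.1‖ ^ 2) ≤ 1 := exp_le_one_iff.2 (by
      simp only [neg_mul, neg_nonpos]; positivity)
    exact (mul_le_of_le_one_right (by positivity) h_ind).trans
      (mul_le_of_le_one_right (by positivity) h_exp)
  have h_bound : ∀ᵐ q ∂volume.restrict {q : EuclideanSpace ℝ (Fin n) × ℝ | q.2 < T'},
      ‖Function.uncurry (heatSupersolution n T) q‖ ≤ G q := by
    refine (ae_restrict_iff' (measurableSet_lt measurable_snd measurable_const)).2
      (.of_forall ?_)
    rintro ⟨x, t⟩ (ht : t < T')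
    rw [Function.uncurry_apply_pair, Real.norm_of_nonneg (heatSupersolution_nonneg hT x t)]
    rcases lt_or_ge t 0 with ht₀ | ht₀
    · rw [heatSupersolution_of_neg x ht₀]
      exact mul_nonneg (by positivity) (indicator_nonneg (fun _ _ => zero_le_one) _)
    · simp only [G, indicator_of_mem (mem_Ico.2 ⟨ht₀, ht⟩), Pi.one_apply, mul_one]
      exact heatSupersolution_le hT x (ht.le.trans (le_max_left T' 0))
  have hF : Integrable (Function.uncurry (heatSupersolution n T))
      (volume.restrict {q : EuclideanSpace ℝ (Fin n) × ℝ | q.2 < T'}) :=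
    hG.restrict.mono' measurable_heatSupersolution.aestronglyMeasurable h_bound
  exact (memLp_of_integrable_of_bound hF (h_bound.mono fun q hq => hq.trans (hG_le q)) hp).2

theorem not_ae_heatSupersolution_eq_zero (hT : 0 < T) :
    ¬ ∀ᵐ q : EuclideanSpace ℝ (Fin n) × ℝ, heatSupersolution n T q.1 q.2 = 0 := by
  intro h_ae
  have h_pos : 0 < volume {q : EuclideanSpace ℝ (Fin n) × ℝ | 0 < q.2} :=
    (isOpen_lt continuous_const continuous_snd).measure_pos volume ⟨(0, 1), by simp⟩
  refine h_pos.ne' (measure_mono_null (fun q hq => ?_) (ae_iff.1 h_ae))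
  exact (heatSupersolution_pos hT q.1 (le_of_lt hq)).ne'

end HeatSupersolution

theorem super_problem_linear_solution_general (n : ℕ) (α T : ℝ)
    (hα : 0 < α) (hT : 0 < T) :
    ∃ a : ℝ, 0 < a ∧
      ∀ f : EuclideanSpace ℝ (Fin n) → ℝ → ℝ,
        (f = fun x t => if 0 ≤ t then Real.exp (a * (t + T)) * Phi n 1 x (t + T) else 0) →
        (∀ p : ℝ, 1 ≤ p → MemXp n (ENNReal.ofReal p) f) ∧
        (∀ (x : EuclideanSpace ℝ (Fin n)) (t : ℝ), J n α f x t ≤ ENNReal.ofReal (f x t)) ∧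
        (∀ (x : EuclideanSpace ℝ (Fin n)) (t : ℝ), t < 0 → f x t = 0) ∧
        ¬ (∀ᵐ q : EuclideanSpace ℝ (Fin n) × ℝ, f q.1 q.2 = 0) := by
  refine ⟨1, one_pos, fun f hf => ?_⟩
  obtain rfl : f = heatSupersolution n T := by
    ext x t
    simp only [hf, heatSupersolution, one_mul]
    split_ifs with ht
    · rw [Phi_one_eq_heatKernel x (by linarith)]
    · rfl
  exact ⟨fun p hp => memXp_heatSupersolution hT (ENNReal.one_le_ofReal.2 hp),
    J_heatSupersolution_le hα hT, fun x _ => heatSupersolution_of_neg x,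
    not_ae_heatSupersolution_eq_zero hT⟩

theorem super_problem_linear_solution (n : ℕ) (hn : 1 ≤ n) (α T : ℝ)
    (hα : 0 < α) (hT : 0 < T) :
    ∃ a : ℝ, 0 < a ∧
      ∀ f : EuclideanSpace ℝ (Fin n) → ℝ → ℝ,
        (f = fun x t => if 0 ≤ t then Real.exp (a * (t + T)) * Phi n 1 x (t + T) else 0) →
        (∀ p : ℝ, 1 ≤ p → MemXp n (ENNReal.ofReal p) f) ∧
        (∀ (x : EuclideanSpace ℝ (Fin n)) (t : ℝ), J n α f x t ≤ ENNReal.ofReal (f x t)) ∧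
        (∀ (x : EuclideanSpace ℝ (Fin n)) (t : ℝ), t < 0 → f x t = 0) ∧
        ¬ (∀ᵐ q : EuclideanSpace ℝ (Fin n) × ℝ, f q.1 q.2 = 0) :=
  super_problem_linear_solution_general n α T hα hT
end

section
/- Let n ≥ 1, λ > 1, 0 < α < (n+2)/2·(1−1/λ), and p ∈ [1,∞). Define w(z) := exp(−λ|z|²/4)·(|z|² + 1)^{−λ((n+2)/2 − αλ/(λ−1))} for z ∈ ℝ^n, and f(x,t) := t^{−αλ/(λ−1)}·w(x/√t) for t > 0 and f(x,t) := 0 for t ≤ 0. Then f ∈ X^p if and only if α < (n+2)/(2p)·(1−1/λ). -/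
open MeasureTheory Real Set
open scoped ENNReal

/-- The profile `w(z) = e^{-λ|z|²/4} (|z|²+1)^{-λ((n+2)/2 - αλ/(λ-1))}`. -/
noncomputable def wProfile (n : ℕ) (α lam : ℝ) (z : EuclideanSpace ℝ (Fin n)) : ℝ :=
  Real.exp (-(lam * ‖z‖ ^ 2 / 4)) *
    (‖z‖ ^ 2 + 1) ^ (-(lam * (((n : ℝ) + 2) / 2 - α * lam / (lam - 1))))

/-- The self-similar function `f(x,t) = t^{-αλ/(λ-1)} w(x/√t)` for `t > 0`, `0` for `t ≤ 0`. -/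
noncomputable def fSelfSim (n : ℕ) (α lam : ℝ) (x : EuclideanSpace ℝ (Fin n)) (t : ℝ) : ℝ :=
  if 0 < t then t ^ (-(α * lam / (lam - 1))) * wProfile n α lam ((Real.sqrt t)⁻¹ • x) else 0

/-!
With `β = αλ/(λ-1)`, the function is parabolically self-similar, `f(x,t) = t^{-β} w(x/√t)`,
so the substitution `x = √t z` gives `∫ |f(x,t)|^p dx = t^{n/2 - βp} ∫ w^p` for `t > 0`.
The profile `w` is a Gaussian times a power of `|z|² + 1`, hence `0 < ∫ w^p < ∞`, and by
Tonelli `f` lies in `L^p(ℝ^n × (-∞,T))` exactly when `∫_0^T t^{n/2 - βp} dt < ∞`, that is when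
`n/2 - βp > -1`; this rearranges to `α < (n+2)/(2p) (1 - 1/λ)`.
-/

theorem one_add_rpow_le_mul_exp {k ε s : ℝ} (hk : 0 ≤ k) (hε0 : 0 < ε) (hε1 : ε ≤ 1)
    (hs : 0 ≤ s) : (1 + s) ^ k ≤ ε ^ (-k) * exp (ε * k * s) := by
  have h : 1 + s ≤ ε⁻¹ * exp (ε * s) := by
    rw [le_inv_mul_iff₀ hε0]
    nlinarith [add_one_le_exp (ε * s)]
  calc (1 + s) ^ k ≤ (ε⁻¹ * exp (ε * s)) ^ k := by gcongr
    _ = ε ^ (-k) * exp (ε * k * s) := by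
      rw [mul_rpow (by positivity) (exp_pos _).le, inv_rpow hε0.le, rpow_neg hε0.le, ← exp_mul]
      ring_nf

theorem exists_exp_neg_mul_mul_add_one_rpow_le {b : ℝ} (hb : 0 < b) (k : ℝ) :
    ∃ C, ∀ s, 0 ≤ s → exp (-(b * s)) * (s + 1) ^ k ≤ C * exp (-(b / 2) * s) := by
  set K := max k 0
  have hK : 0 ≤ K := le_max_right k 0
  set ε := b / (2 * K + b)
  have hε0 : 0 < ε := by positivity
  have hε1 : ε ≤ 1 := div_le_one_of_le₀ (by linarith) (by positivity)
  have hεK : ε * K ≤ b / 2 := by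
    rw [div_mul_eq_mul_div, div_le_div_iff₀ (by positivity) two_pos]
    nlinarith
  refine ⟨ε ^ (-K), fun s hs => ?_⟩
  have hpoly : (s + 1) ^ k ≤ ε ^ (-K) * exp (ε * K * s) := by
    calc (s + 1) ^ k ≤ (1 + s) ^ K := by
          rw [add_comm]
          exact rpow_le_rpow_of_exponent_le (by linarith) (le_max_left _ _)
      _ ≤ ε ^ (-K) * exp (ε * K * s) := one_add_rpow_le_mul_exp hK hε0 hε1 hs
  calc exp (-(b * s)) * (s + 1) ^ k ≤ exp (-(b * s)) * (ε ^ (-K) * exp (ε * K * s)) := by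
        gcongr
    _ = ε ^ (-K) * exp (-(b * s) + ε * K * s) := by rw [exp_add]; ring
    _ ≤ ε ^ (-K) * exp (-(b / 2) * s) := by gcongr; nlinarith

theorem setLIntegral_Ioo_rpow_lt_top_iff {T c : ℝ} (hT : 0 < T) :
    ∫⁻ t in Ioo 0 T, ENNReal.ofReal (t ^ c) < ⊤ ↔ -1 < c := by
  have hnonneg : 0 ≤ᵐ[volume.restrict (Ioo 0 T)] fun t : ℝ => t ^ c :=
    (ae_restrict_mem measurableSet_Ioo).mono fun t ht => rpow_nonneg ht.1.le c
  rw [← intervalIntegral.integrableOn_Ioo_rpow_iff hT, IntegrableOn, Integrable,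
    hasFiniteIntegral_iff_ofReal hnonneg]
  exact ⟨fun h => ⟨(by fun_prop : Measurable fun t : ℝ => t ^ c).aestronglyMeasurable, h⟩,
    And.right⟩

theorem neg_one_lt_div_two_sub_iff {d α lam p : ℝ} (hlam : 1 < lam) (hp : 0 < p) :
    -1 < d / 2 - α * lam / (lam - 1) * p ↔ α < (d + 2) / (2 * p) * (1 - 1 / lam) := by
  have hlam1 : 0 < lam - 1 := by linarith
  rw [show (d + 2) / (2 * p) * (1 - 1 / lam) = (d / 2 + 1) * (lam - 1) / (lam * p) by
      field_simp,
    lt_div_iff₀ (by positivity), show α * lam / (lam - 1) * p = α * (lam * p) / (lam - 1) by ring,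
    ← div_lt_iff₀ hlam1]
  constructor <;> intro <;> linarith

theorem ENNReal.mul_lt_top_iff_of_ne_zero_of_ne_top {a b : ℝ≥0∞} (hb0 : b ≠ 0) (hb : b ≠ ⊤) :
    a * b < ⊤ ↔ a < ⊤ :=
  ⟨fun h => ENNReal.lt_top_of_mul_ne_top_left h.ne hb0, fun h => ENNReal.mul_lt_top h hb.lt_top⟩

section SelfSimilar

variable {E : Type*} [NormedAddCommGroup E] [NormedSpace ℝ E] [FiniteDimensional ℝ E]
  [MeasurableSpace E] [BorelSpace E] (μ : Measure E) [μ.IsAddHaarMeasure]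

theorem lintegral_comp_inv_smul_of_pos (g : E → ℝ≥0∞) {c : ℝ} (hc : 0 < c) :
    ∫⁻ x, g (c⁻¹ • x) ∂μ = ENNReal.ofReal (c ^ Module.finrank ℝ E) * ∫⁻ z, g z ∂μ := by
  have h := lintegral_map_equiv g (MeasurableEquiv.smul₀ c⁻¹ (inv_ne_zero hc.ne')) (μ := μ)
  simp only [MeasurableEquiv.coe_smul₀] at h
  rw [← h, Measure.map_addHaar_smul μ (inv_ne_zero hc.ne'), lintegral_smul_measure, inv_pow,
    inv_inv, abs_of_pos (by positivity), smul_eq_mul]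

noncomputable def selfSimilar (β : ℝ) (w : E → ℝ) (x : E) (t : ℝ) : ℝ :=
  if 0 < t then t ^ (-β) * w ((√t)⁻¹ • x) else 0

theorem lintegral_enorm_selfSimilar_rpow (β : ℝ) (w : E → ℝ) {p t : ℝ} (hp : 0 ≤ p)
    (ht : 0 < t) :
    ∫⁻ x, ‖selfSimilar β w x t‖ₑ ^ p ∂μ =
      ENNReal.ofReal (t ^ (Module.finrank ℝ E / 2 - β * p)) * ∫⁻ z, ‖w z‖ₑ ^ p ∂μ := by
  simp only [selfSimilar, if_pos ht, enorm_mul, ENNReal.mul_rpow_of_nonneg _ _ hp]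
  rw [lintegral_const_mul' _ _ (by simp [hp]),
    lintegral_comp_inv_smul_of_pos μ (fun z => ‖w z‖ₑ ^ p) (sqrt_pos.2 ht), ← mul_assoc,
    Real.enorm_of_nonneg (rpow_nonneg ht.le _), ENNReal.ofReal_rpow_of_nonneg
      (rpow_nonneg ht.le _) hp, ← ENNReal.ofReal_mul (by positivity), ← rpow_mul ht.le,
    sqrt_eq_rpow, ← rpow_natCast, ← rpow_mul ht.le, ← rpow_add ht]
  ring_nf

theorem measurable_uncurry_selfSimilar (β : ℝ) {w : E → ℝ} (hw : Measurable w) :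
    Measurable (Function.uncurry (selfSimilar β w)) := by
  refine Measurable.ite (measurableSet_lt measurable_const measurable_snd) ?_ measurable_const
  exact (measurable_snd.pow_const _).mul (hw.comp (by fun_prop))

theorem setLIntegral_enorm_selfSimilar_rpow_slab (β : ℝ) {w : E → ℝ} (hw : Measurable w)
    {p : ℝ} (hp : 0 < p) (T : ℝ) :
    ∫⁻ q in {q : E × ℝ | q.2 < T}, ‖Function.uncurry (selfSimilar β w) q‖ₑ ^ p ∂μ.prod volume =
      (∫⁻ t in Ioo 0 T, ENNReal.ofReal (t ^ (Module.finrank ℝ E / 2 - β * p))) *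
        ∫⁻ z, ‖w z‖ₑ ^ p ∂μ := by
  have hslab : {q : E × ℝ | q.2 < T} = univ ×ˢ Iio T := by ext; simp
  have hslice : ∀ t, ∫⁻ x, ‖selfSimilar β w x t‖ₑ ^ p ∂μ = (Ioi 0).indicator
      (fun t => ENNReal.ofReal (t ^ (Module.finrank ℝ E / 2 - β * p)) *
        ∫⁻ z, ‖w z‖ₑ ^ p ∂μ) t := by
    intro t
    by_cases ht : 0 < t
    · rw [indicator_of_mem (mem_Ioi.2 ht), lintegral_enorm_selfSimilar_rpow μ β w hp.le ht]
    · simp [selfSimilar, ht, ENNReal.zero_rpow_of_pos hp]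
  rw [hslab, ← Measure.prod_restrict, Measure.restrict_univ,
    lintegral_prod_symm _ ((measurable_uncurry_selfSimilar β hw).enorm.pow_const p).aemeasurable]
  simp only [Function.uncurry_apply_pair, hslice]
  rw [lintegral_indicator measurableSet_Ioi, Measure.restrict_restrict measurableSet_Ioi,
    Ioi_inter_Iio, lintegral_mul_const _ (by fun_prop)]

end SelfSimilar

theorem memXp_selfSimilar_iff {n : ℕ} (β : ℝ) {w : EuclideanSpace ℝ (Fin n) → ℝ}
    (hw : Measurable w) {p : ℝ} (hp : 0 < p) (hw0 : ∫⁻ z, ‖w z‖ₑ ^ p ≠ 0)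
    (hw_top : ∫⁻ z, ‖w z‖ₑ ^ p ≠ ⊤) :
    MemXp n (ENNReal.ofReal p) (selfSimilar β w) ↔ -1 < (n : ℝ) / 2 - β * p := by
  have hslab : ∀ T, eLpNorm (Function.uncurry (selfSimilar β w)) (ENNReal.ofReal p)
      (volume.restrict {q : EuclideanSpace ℝ (Fin n) × ℝ | q.2 < T}) < ⊤ ↔
      ∫⁻ t in Ioo 0 T, ENNReal.ofReal (t ^ ((n : ℝ) / 2 - β * p)) < ⊤ := by
    intro T
    rw [eLpNorm_lt_top_iff_lintegral_rpow_enorm_lt_top (by simpa) ENNReal.ofReal_ne_top,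
      ENNReal.toReal_ofReal hp.le, Measure.volume_eq_prod,
      setLIntegral_enorm_selfSimilar_rpow_slab volume β hw hp, finrank_euclideanSpace_fin,
      ENNReal.mul_lt_top_iff_of_ne_zero_of_ne_top hw0 hw_top]
  refine ⟨fun h => (setLIntegral_Ioo_rpow_lt_top_iff one_pos).1 ((hslab 1).1 (h.2 1)),
    fun h => ⟨measurable_uncurry_selfSimilar β hw, fun T => (hslab T).2 ?_⟩⟩
  rcases le_or_gt T 0 with hT | hT
  · simp [Ioo_eq_empty_of_le hT]
  · exact (setLIntegral_Ioo_rpow_lt_top_iff hT).2 h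

theorem wProfile_pos (n : ℕ) (α lam : ℝ) (z : EuclideanSpace ℝ (Fin n)) :
    0 < wProfile n α lam z :=
  mul_pos (exp_pos _) (rpow_pos_of_pos (by positivity) _)

theorem continuous_wProfile (n : ℕ) (α lam : ℝ) : Continuous (wProfile n α lam) :=
  (by fun_prop : Continuous fun z : EuclideanSpace ℝ (Fin n) => exp (-(lam * ‖z‖ ^ 2 / 4))).mul
    ((by fun_prop : Continuous fun z : EuclideanSpace ℝ (Fin n) => ‖z‖ ^ 2 + 1).rpow_const
      fun _ => Or.inl (by positivity))

theorem exists_wProfile_le (n : ℕ) (α : ℝ) {lam : ℝ} (hlam : 0 < lam) :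
    ∃ C, ∀ z, wProfile n α lam z ≤ C * exp (-(lam / 8) * ‖z‖ ^ 2) := by
  obtain ⟨C, hC⟩ := exists_exp_neg_mul_mul_add_one_rpow_le (by positivity : 0 < lam / 4)
    (-(lam * (((n : ℝ) + 2) / 2 - α * lam / (lam - 1))))
  refine ⟨C, fun z => ?_⟩
  unfold wProfile
  convert hC (‖z‖ ^ 2) (by positivity) using 3 <;> ring_nf

theorem lintegral_enorm_wProfile_rpow_ne_top (n : ℕ) (α : ℝ) {lam p : ℝ} (hlam : 0 < lam)
    (hp : 0 < p) : ∫⁻ z, ‖wProfile n α lam z‖ₑ ^ p ≠ ⊤ := by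
  obtain ⟨C, hC⟩ := exists_wProfile_le n α hlam
  have hgauss := (integrable_exp_neg_mul_sq_norm (V := EuclideanSpace ℝ (Fin n))
    (by positivity : 0 < p * (lam / 8))).const_mul (C ^ p)
  refine (lt_of_le_of_lt (lintegral_mono fun z => ?_) hgauss.lintegral_lt_top).ne
  have hw := wProfile_pos n α lam z
  have hCz : 0 ≤ C * exp (-(lam / 8) * ‖z‖ ^ 2) := hw.le.trans (hC z)
  have hC0 : 0 ≤ C := nonneg_of_mul_nonneg_left hCz (exp_pos _)
  rw [Real.enorm_of_nonneg hw.le, ENNReal.ofReal_rpow_of_nonneg hw.le hp.le]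
  refine ENNReal.ofReal_le_ofReal ((rpow_le_rpow hw.le (hC z) hp.le).trans_eq ?_)
  rw [mul_rpow hC0 (exp_pos _).le, ← exp_mul]
  ring_nf

theorem lintegral_enorm_wProfile_rpow_ne_zero (n : ℕ) (α lam p : ℝ) :
    ∫⁻ z, ‖wProfile n α lam z‖ₑ ^ p ≠ 0 := by
  intro h
  rw [lintegral_eq_zero_iff ((continuous_wProfile n α lam).measurable.enorm.pow_const p)] at h
  obtain ⟨z, hz⟩ := h.exists
  exact (ENNReal.rpow_pos (enorm_pos.2 (wProfile_pos n α lam z).ne') enorm_ne_top).ne' hz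

theorem selfsimilar_memXp_iff_general (n : ℕ) (α lam p : ℝ)
    (hlam : 1 < lam)
    (hp : 1 ≤ p) :
    MemXp n (ENNReal.ofReal p) (fSelfSim n α lam) ↔
      α < ((n : ℝ) + 2) / (2 * p) * (1 - 1 / lam) := by
  have hp0 : 0 < p := by linarith
  have hf : fSelfSim n α lam = selfSimilar (α * lam / (lam - 1)) (wProfile n α lam) := rfl
  rw [hf, memXp_selfSimilar_iff _ (continuous_wProfile n α lam).measurable hp0
    (lintegral_enorm_wProfile_rpow_ne_zero n α lam p)
    (lintegral_enorm_wProfile_rpow_ne_top n α (by linarith) hp0),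
    neg_one_lt_div_two_sub_iff hlam hp0]

theorem selfsimilar_memXp_iff (n : ℕ) (hn : 1 ≤ n) (α lam p : ℝ)
    (hlam : 1 < lam) (hα0 : 0 < α) (hα1 : α < ((n : ℝ) + 2) / 2 * (1 - 1 / lam))
    (hp : 1 ≤ p) :
    MemXp n (ENNReal.ofReal p) (fSelfSim n α lam) ↔
      α < ((n : ℝ) + 2) / (2 * p) * (1 - 1 / lam) :=
  selfsimilar_memXp_iff_general n α lam p hlam hp
end

section
/- Let n ≥ 1. There exists a constant c > 0, depending only on n, such that for all x ∈ ℝ^n and all t, τ ∈ (0,∞) with |x|² < t and t/4 < τ < 3t/4, one has ∫_{|ξ|² < τ} Φ₁(x−ξ, t−τ) dξ ≥ c. -/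
/-!
The ball of radius `√t / 2` lies in `{‖ξ‖² < τ}`. On it `‖x - ξ‖² ≤ 9t/4 < 9(t - τ)`, and
`t - τ ≤ t`, so the kernel is at least `(4πt)^(-n/2) e^(-9/4)`, while the ball has volume
`(√t / 2)^n |B₁|`. The powers of `t` cancel, leaving `c = (16π)^(-n/2) |B₁| e^(-9/4)`.
-/

open MeasureTheory Real Set
open scoped ENNReal

open Metric

section

variable {n : ℕ}

lemma Phi_one_of_pos {t : ℝ} (ht : 0 < t) (x : EuclideanSpace ℝ (Fin n)) :
    Phi n 1 x t = (4 * π * t) ^ (-(n : ℝ) / 2) * exp (-‖x‖ ^ 2 / (4 * t)) := by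
  simp [Phi, ht]

lemma Phi_nonneg_s18 {α : ℝ} (hα : 0 ≤ α) (x : EuclideanSpace ℝ (Fin n)) (t : ℝ) :
    0 ≤ Phi n α x t := by
  unfold Phi
  split_ifs with ht
  · have := Gamma_nonneg_of_nonneg hα
    positivity
  · rfl

lemma continuous_Phi_one {t : ℝ} (ht : 0 < t) :
    Continuous fun x : EuclideanSpace ℝ (Fin n) ↦ Phi n 1 x t := by
  simp only [Phi_one_of_pos ht]
  fun_prop

lemma rpow_mul_exp_le_Phi_one {s t a : ℝ} {y : EuclideanSpace ℝ (Fin n)} (hs : 0 < s)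
    (hst : s ≤ t) (hy : ‖y‖ ^ 2 ≤ 4 * a * s) :
    (4 * π * t) ^ (-(n : ℝ) / 2) * exp (-a) ≤ Phi n 1 y s := by
  rw [Phi_one_of_pos hs]
  gcongr ?_ * exp ?_
  · exact rpow_le_rpow_of_nonpos (by positivity) (by gcongr) 
      (by rw [neg_div]; exact neg_nonpos.2 (by positivity))
  · rw [neg_div, neg_le_neg_iff, div_le_iff₀ (by positivity)]
    linarith

lemma rpow_mul_volume_ball_sqrt_div_two {t : ℝ} (ht : 0 < t) :
    (4 * π * t) ^ (-(n : ℝ) / 2) * volume.real (ball (0 : EuclideanSpace ℝ (Fin n)) (√t / 2)) =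
      (16 * π) ^ (-(n : ℝ) / 2) * volume.real (ball (0 : EuclideanSpace ℝ (Fin n)) 1) := by
  have hr : (√t / 2) ^ n = (t / 4) ^ ((n : ℝ) / 2) := by
    rw [← rpow_natCast, sqrt_eq_rpow, div_rpow (by positivity) (by norm_num), ← rpow_mul ht.le,
      div_rpow ht.le (by norm_num), show (4 : ℝ) = 2 ^ (2 : ℝ) by norm_num,
      ← rpow_mul (by norm_num)]
    ring_nf
  have hscale :
      (4 * π * t) ^ (-(n : ℝ) / 2) * (t / 4) ^ ((n : ℝ) / 2) = (16 * π) ^ (-(n : ℝ) / 2) := by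
    rw [neg_div, rpow_neg (by positivity), inv_mul_eq_div,
      ← div_rpow (by positivity) (by positivity), rpow_neg (by positivity),
      ← inv_rpow (by positivity)]
    congr 1
    field_simp
    ring
  rw [measureReal_def, Measure.addHaar_ball_of_pos _ _ (by positivity), finrank_euclideanSpace_fin,
    ENNReal.toReal_mul, ENNReal.toReal_ofReal (by positivity), ← measureReal_def, hr, ← mul_assoc,
    hscale]

lemma ball_zero_subset_setOf_norm_sq_lt {E : Type*} [SeminormedAddCommGroup E] {r τ : ℝ}
    (h : r ^ 2 ≤ τ) : ball (0 : E) r ⊆ {ξ | ‖ξ‖ ^ 2 < τ} := by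
  intro ξ hξ
  rw [mem_ball_zero_iff] at hξ
  have := norm_nonneg ξ
  show ‖ξ‖ ^ 2 < τ
  nlinarith

lemma integrableOn_Phi_one_sub {s τ : ℝ} (hs : 0 < s) (x : EuclideanSpace ℝ (Fin n)) :
    IntegrableOn (fun ξ ↦ Phi n 1 (x - ξ) s) {ξ | ‖ξ‖ ^ 2 < τ} := by
  have hsub : {ξ : EuclideanSpace ℝ (Fin n) | ‖ξ‖ ^ 2 < τ} ⊆ closedBall 0 √τ :=
    fun ξ hξ ↦ mem_closedBall_zero_iff.2 (le_sqrt_of_sq_le (le_of_lt hξ))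
  exact (((continuous_Phi_one hs).comp (continuous_sub_left x)).continuousOn.integrableOn_compact
    (isCompact_closedBall _ _)).mono_set hsub

end

theorem kernel_lower_bound_general (n : ℕ) :
    ∃ c : ℝ, 0 < c ∧ ∀ (x : EuclideanSpace ℝ (Fin n)) (t τ : ℝ),
      0 < t → 0 < τ → ‖x‖ ^ 2 < t → t / 4 < τ → τ < 3 * t / 4 →
      c ≤ ∫ ξ in {ξ : EuclideanSpace ℝ (Fin n) | ‖ξ‖ ^ 2 < τ}, Phi n 1 (x - ξ) (t - τ) := by
  have hV : 0 < volume.real (ball (0 : EuclideanSpace ℝ (Fin n)) 1) :=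
    ENNReal.toReal_pos (measure_ball_pos volume 0 one_pos).ne' measure_ball_lt_top.ne
  refine ⟨(16 * π) ^ (-(n : ℝ) / 2) * volume.real (ball (0 : EuclideanSpace ℝ (Fin n)) 1) *
    exp (-(9 / 4)), by positivity, fun x t τ ht _ hx hτ_lower hτ_upper ↦ ?_⟩
  have hsqrt : √t ^ 2 = t := sq_sqrt ht.le
  have hball : ball 0 (√t / 2) ⊆ {ξ : EuclideanSpace ℝ (Fin n) | ‖ξ‖ ^ 2 < τ} :=
    ball_zero_subset_setOf_norm_sq_lt (by linarith [div_pow √t 2 2])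
  have hkernel : ∀ ξ ∈ ball 0 (√t / 2),
      (4 * π * t) ^ (-(n : ℝ) / 2) * exp (-(9 / 4)) ≤ Phi n 1 (x - ξ) (t - τ) := by
    intro ξ hξ
    have hξ' : ‖ξ‖ < √t / 2 := mem_ball_zero_iff.1 hξ
    have hx' : ‖x‖ < √t := (lt_sqrt (norm_nonneg x)).2 hx
    have hdist : ‖x - ξ‖ ≤ 3 / 2 * √t := by linarith [norm_sub_le x ξ]
    refine rpow_mul_exp_le_Phi_one (by linarith) (by linarith) ?_
    nlinarith [norm_nonneg (x - ξ)]
  have hint := integrableOn_Phi_one_sub (τ := τ) (sub_pos.2 (by linarith : τ < t)) x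
  calc _ = (4 * π * t) ^ (-(n : ℝ) / 2) * exp (-(9 / 4)) *
          volume.real (ball (0 : EuclideanSpace ℝ (Fin n)) (√t / 2)) := by
        rw [← rpow_mul_volume_ball_sqrt_div_two ht]; ring
    _ ≤ ∫ ξ in ball 0 (√t / 2), Phi n 1 (x - ξ) (t - τ) :=
        setIntegral_ge_of_const_le_real measurableSet_ball measure_ball_lt_top.ne hkernel
          (hint.mono_set hball)
    _ ≤ _ := setIntegral_mono_set hint (ae_of_all _ fun _ ↦ Phi_nonneg_s18 zero_le_one _ _)
          hball.eventuallyLE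

theorem kernel_lower_bound (n : ℕ) (hn : 1 ≤ n) :
    ∃ c : ℝ, 0 < c ∧ ∀ (x : EuclideanSpace ℝ (Fin n)) (t τ : ℝ),
      0 < t → 0 < τ → ‖x‖ ^ 2 < t → t / 4 < τ → τ < 3 * t / 4 →
      c ≤ ∫ ξ in {ξ : EuclideanSpace ℝ (Fin n) | ‖ξ‖ ^ 2 < τ}, Phi n 1 (x - ξ) (t - τ) :=
  kernel_lower_bound_general n
end
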